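/- arXiv:1408.0550 — 5 statements merged into one kernel-verified Lean document; each statement's English description precedes it below -/
import Mathlib

section
/- For relatively prime positive integers a and b, a positive integer n is a gap of the numerical semigroup generated by a and b (i.e., n is not representable as a nonnegative integer combination of a and b) if and only if n = ab - ja - hb for some integers j with 1 ≤ j ≤ b-1 and h with 1 ≤ h ≤ a-1. -/
/-!
Since `a` and `b` are coprime, every integer `n` has a unique representation `n = x * a + y * b`
with `0 ≤ x < b`, and `n` lies in the semigroup exactly when `y ≥ 0`. For a positive gap this forces
`1 ≤ x` and `1 - a ≤ y < 0`, so `j = b - x` and `h = -y` work. Conversely, if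
`a * b - j * a - h * b = x * a + y * b` with `x, y ≥ 0`, then `(b - j - x) * a = (y + h) * b` is
positive, so `b` divides the positive number `b - j - x < b`, which is absurd.
-/

namespace Int

variable {a b : ℤ}

theorem exists_eq_mul_add_mul_of_isCoprime (n : ℤ) (hab : IsCoprime a b) (hb : 0 < b) :
    ∃ x y : ℤ, 0 ≤ x ∧ x < b ∧ n = x * a + y * b := by
  obtain ⟨u, v, huv⟩ := hab
  refine ⟨n * u % b, n * u / b * a + n * v, emod_nonneg _ hb.ne', emod_lt_of_pos _ hb, ?_⟩
  linear_combination (-n) * huv - a * emod_add_mul_ediv (n * u) b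

theorem one_le_and_one_sub_le_of_eq_mul_add_mul {n x y : ℤ} (ha : 0 ≤ a) (hb : 0 < b)
    (hn : 0 < n) (hxb : x < b) (hy : y < 0) (hxy : n = x * a + y * b) :
    1 ≤ x ∧ 1 - a ≤ y := by
  constructor <;> nlinarith

theorem mul_sub_mul_sub_mul_ne_mul_add_mul (hab : IsCoprime a b) (ha : 0 ≤ a) (hb : 0 < b)
    {j h x y : ℤ} (hj : 1 ≤ j) (hh : 1 ≤ h) (hx : 0 ≤ x) (hy : 0 ≤ y) :
    a * b - j * a - h * b ≠ x * a + y * b := by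
  intro heq
  have key : (b - j - x) * a = (y + h) * b := by linear_combination heq
  have hpos : 0 < b - j - x := by
    by_contra! hle
    nlinarith [mul_nonpos_of_nonpos_of_nonneg hle ha]
  have hdvd : b ∣ b - j - x := hab.symm.dvd_of_dvd_mul_right ⟨y + h, by linear_combination key⟩
  have := le_of_dvd hpos hdvd
  omega

end Int

theorem gaps_of_two_generated_semigroup_general (a b : ℕ) (hb : 0 < b)
    (hab : Nat.Coprime a b) (n : ℕ) (hn : 0 < n) :
    (¬ ∃ x y : ℕ, n = x * a + y * b) ↔
      ∃ j h : ℕ, 1 ≤ j ∧ j ≤ b - 1 ∧ 1 ≤ h ∧ h ≤ a - 1 ∧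
        (n : ℤ) = (a : ℤ) * b - j * a - h * b := by
  have hco : IsCoprime (a : ℤ) b := Nat.isCoprime_iff_coprime.mpr hab
  have hbZ : (0 : ℤ) < b := by exact_mod_cast hb
  constructor
  · intro hgap
    obtain ⟨x, y, hx0, hxb, hxy⟩ := Int.exists_eq_mul_add_mul_of_isCoprime n hco hbZ
    have hy : y < 0 := by
      by_contra! hy
      lift x to ℕ using hx0
      lift y to ℕ using hy
      exact hgap ⟨x, y, by exact_mod_cast hxy⟩
    obtain ⟨hx1, hya⟩ := Int.one_le_and_one_sub_le_of_eq_mul_add_mul (by positivity) hbZ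
      (by exact_mod_cast hn) hxb hy hxy
    refine ⟨(b - x).toNat, (-y).toNat, by omega, by omega, by omega, by omega, ?_⟩
    rw [Int.toNat_of_nonneg (by omega), Int.toNat_of_nonneg (by omega)]
    linear_combination hxy
  · rintro ⟨j, h, hj, -, hh, -, heq⟩ ⟨x, y, hxy⟩
    refine Int.mul_sub_mul_sub_mul_ne_mul_add_mul (j := j) (h := h) (x := x) (y := y) hco
      (by positivity) hbZ (by exact_mod_cast hj) (by exact_mod_cast hh) (by positivity)
      (by positivity) ?_
    rw [← heq]
    exact_mod_cast hxy

theorem gaps_of_two_generated_semigroup (a b : ℕ) (ha : 0 < a) (hb : 0 < b)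
    (hab : Nat.Coprime a b) (n : ℕ) (hn : 0 < n) :
    (¬ ∃ x y : ℕ, n = x * a + y * b) ↔
      ∃ j h : ℕ, 1 ≤ j ∧ j ≤ b - 1 ∧ 1 ≤ h ∧ h ≤ a - 1 ∧
        (n : ℤ) = (a : ℤ) * b - j * a - h * b :=
  gaps_of_two_generated_semigroup_general a b hb hab n hn
end

section
/- Let a, b, c be positive integers with gcd(a,b,c) = 1, p = gcd(a,b), q = gcd(a,c), r = gcd(b,c), and write a = dpq, b = epr, c = fqr. For positive integers m and n, if s = (m-1)d + (n-1)e - f is a maximal element of the poset P(d,e,f) of gaps of S(d,e,f), then t = (mr-1)dpq + (nq-1)epr - fqr is a gap of S(a,b,c), i.e., t is not a nonnegative integer combination of a, b, c. -/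
/-- Membership in the numerical semigroup generated by x, y, z (viewed in ℤ). -/
def SemiZ (x y z n : ℤ) : Prop := ∃ i j k : ℕ, n = (i : ℤ) * x + (j : ℤ) * y + (k : ℤ) * z

/-- n is a maximal element of the poset of gaps of S(x,y,z). -/
def MaxGapZ (x y z n : ℤ) : Prop :=
  (0 < n ∧ ¬ SemiZ x y z n) ∧ SemiZ x y z (n + x) ∧ SemiZ x y z (n + y) ∧ SemiZ x y z (n + z)

/-!
Let `s` be the gap of `S(d,e,f)` and `t` its transfer. Then `t + a + b + c = pqr (s + d + e + f)`
and `t = pqr s + a (r - 1) + b (q - 1) + c (p - 1) > 0`. If `t = i a + j b + k c`, then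
`pqr (s + d + e + f) = (i+1) a + (j+1) b + (k+1) c`. As `gcd(a,b,c) = 1`, we have
`gcd(r, a) = gcd(q, b) = gcd(p, c) = 1`, so reducing modulo `r`, `q`, `p` gives `r ∣ i+1`,
`q ∣ j+1`, `p ∣ k+1`. Dividing by `pqr` writes `s + d + e + f` as a combination of `d, e, f` with
positive coefficients, i.e. `s ∈ S(d,e,f)`.
-/

theorem semiZ_of_add_eq_pos_comb (x y z n : ℤ) {i j k : ℕ} (hi : 0 < i) (hj : 0 < j) (hk : 0 < k)
    (h : n + x + y + z = i * x + j * y + k * z) : SemiZ x y z n :=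
  ⟨i - 1, j - 1, k - 1, by push_cast [Nat.cast_sub hi, Nat.cast_sub hj, Nat.cast_sub hk]; linarith⟩

theorem exists_pos_eq_mul_of_dvd_comb {r x y z : ℕ} {N : ℤ} {u v w : ℕ} (hrx : Nat.Coprime r x)
    (hy : r ∣ y) (hz : r ∣ z) (hN : (r : ℤ) ∣ N) (h : N = u * x + v * y + w * z) (hu : 0 < u) :
    ∃ u', 0 < u' ∧ u = r * u' := by
  have hux : (r : ℤ) ∣ u * x := by
    have hvw : (r : ℤ) ∣ v * y + w * z :=
      dvd_add (dvd_mul_of_dvd_right (Int.natCast_dvd_natCast.mpr hy) _)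
        (dvd_mul_of_dvd_right (Int.natCast_dvd_natCast.mpr hz) _)
    simpa [h] using dvd_sub hN hvw
  obtain ⟨u', rfl⟩ := Int.natCast_dvd_natCast.mp
    ((Nat.isCoprime_iff_coprime.mpr hrx).dvd_of_dvd_mul_right hux)
  exact ⟨u', Nat.pos_of_mul_pos_left hu, rfl⟩

theorem semiZ_of_mul_add_eq {d e f p q r : ℕ} {N : ℤ} {i j k : ℕ}
    (hp : 0 < p) (hq : 0 < q) (hr : 0 < r) (hpc : Nat.Coprime p (f * q * r))
    (hqb : Nat.Coprime q (e * p * r)) (hra : Nat.Coprime r (d * p * q))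
    (h : (p * q * r : ℤ) * (N + d + e + f) = (i + 1 : ℕ) * (d * p * q : ℕ) +
      (j + 1 : ℕ) * (e * p * r : ℕ) + (k + 1 : ℕ) * (f * q * r : ℕ)) :
    SemiZ d e f N := by
  obtain ⟨i', hi', hi⟩ := exists_pos_eq_mul_of_dvd_comb hra (dvd_mul_left r (e * p))
    (dvd_mul_left r (f * q)) ⟨p * q * (N + d + e + f), by ring⟩ h i.succ_pos
  obtain ⟨j', hj', hj⟩ := exists_pos_eq_mul_of_dvd_comb (u := j + 1) (v := i + 1) (w := k + 1) hqb
    (dvd_mul_left q (d * p)) ((dvd_mul_left q f).mul_right r)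
    ⟨p * r * (N + d + e + f), by ring⟩ (h.trans (by ring)) j.succ_pos
  obtain ⟨k', hk', hk⟩ := exists_pos_eq_mul_of_dvd_comb (u := k + 1) (v := i + 1) (w := j + 1) hpc
    ((dvd_mul_left p d).mul_right q) ((dvd_mul_left p e).mul_right r)
    ⟨q * r * (N + d + e + f), by ring⟩ (h.trans (by ring)) k.succ_pos
  refine semiZ_of_add_eq_pos_comb _ _ _ _ hi' hj' hk' (mul_left_cancel₀ (a := (p * q * r : ℤ))
    (by positivity) ?_)
  rw [h, hi, hj, hk]
  push_cast
  ring

theorem maximal_gap_transfer_general (a b c p q r d e f : ℕ)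
    (ha : 0 < a) (hb : 0 < b)
    (habc : Nat.gcd (Nat.gcd a b) c = 1)
    (hp : p = Nat.gcd a b) (hq : q = Nat.gcd a c) (hr : r = Nat.gcd b c)
    (hda : a = d * p * q) (heb : b = e * p * r) (hfc : c = f * q * r)
    (m n : ℕ)
    (hmax : MaxGapZ d e f (((m : ℤ) - 1) * d + ((n : ℤ) - 1) * e - f)) :
    0 < ((m : ℤ) * r - 1) * (d * p * q) + ((n : ℤ) * q - 1) * (e * p * r) - f * q * r ∧
      ¬ SemiZ a b c
        (((m : ℤ) * r - 1) * (d * p * q) + ((n : ℤ) * q - 1) * (e * p * r) - f * q * r) := by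
  obtain ⟨⟨hs, hgap⟩, -⟩ := hmax
  have hp0 : 0 < p := hp ▸ Nat.gcd_pos_of_pos_left b ha
  have hq0 : 0 < q := hq ▸ Nat.gcd_pos_of_pos_left c ha
  have hr0 : 0 < r := hr ▸ Nat.gcd_pos_of_pos_left c hb
  have hpc : Nat.Coprime p c := hp ▸ habc
  have hqb : Nat.Coprime q b := by rw [hq, Nat.Coprime, ← Nat.gcd_right_comm, habc]
  have hra : Nat.Coprime r a := by rw [hr, Nat.Coprime, Nat.gcd_comm, ← Nat.gcd_assoc, habc]
  constructor
  · have hp1 : (0 : ℤ) ≤ p - 1 := sub_nonneg.mpr (by exact_mod_cast hp0)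
    have hq1 : (0 : ℤ) ≤ q - 1 := sub_nonneg.mpr (by exact_mod_cast hq0)
    have hr1 : (0 : ℤ) ≤ r - 1 := sub_nonneg.mpr (by exact_mod_cast hr0)
    linarith [mul_pos (by positivity : (0 : ℤ) < p * q * r) hs,
      mul_nonneg (by positivity : (0 : ℤ) ≤ d * p * q) hr1,
      mul_nonneg (by positivity : (0 : ℤ) ≤ e * p * r) hq1,
      mul_nonneg (by positivity : (0 : ℤ) ≤ f * q * r) hp1]
  · rintro ⟨i, j, k, ht⟩
    subst hda heb hfc
    refine hgap (semiZ_of_mul_add_eq hp0 hq0 hr0 hpc hqb hra (i := i) (j := j) (k := k) ?_)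
    push_cast at ht ⊢
    linear_combination ht

theorem maximal_gap_transfer (a b c p q r d e f : ℕ)
    (ha : 0 < a) (hb : 0 < b) (hc : 0 < c)
    (hd : 0 < d) (he : 0 < e) (hf : 0 < f)
    (habc : Nat.gcd (Nat.gcd a b) c = 1)
    (hp : p = Nat.gcd a b) (hq : q = Nat.gcd a c) (hr : r = Nat.gcd b c)
    (hda : a = d * p * q) (heb : b = e * p * r) (hfc : c = f * q * r)
    (m n : ℕ) (hm : 1 ≤ m) (hn : 1 ≤ n)
    (hmax : MaxGapZ d e f (((m : ℤ) - 1) * d + ((n : ℤ) - 1) * e - f)) :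
    0 < ((m : ℤ) * r - 1) * (d * p * q) + ((n : ℤ) * q - 1) * (e * p * r) - f * q * r ∧
      ¬ SemiZ a b c
        (((m : ℤ) * r - 1) * (d * p * q) + ((n : ℤ) * q - 1) * (e * p * r) - f * q * r) :=
  maximal_gap_transfer_general a b c p q r d e f ha hb habc hp hq hr hda heb hfc m n hmax
end

section
/- If a < b < c are pairwise relatively prime positive integers and c is not a nonnegative integer combination of a and b, then the poset P(a,b,c) of positive integers not in S(a,b,c) has at least two distinct maximal elements. -/
/-!
Let `Ap` be the Apéry set of `S = S(a,b,c)` with respect to `a`: the least elements of `S` in the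
residue classes modulo `a`. They lie in `⟨b, c⟩` and below `a * b`, so each is `j * b + k * c` for
a unique pair `(j, k)`, and these pairs form a finite lower set `L` of `ℕ × ℕ` with exactly `a`
elements. For a maximal element `(j, k) ≠ 0` of `L`, the number `j * b + k * c - a` is a maximal
gap, and distinct maximal elements give distinct gaps.

So it suffices that `L` has two maximal elements, i.e. that it is not a rectangle
`[0, β) × [0, γ)`. If it were, then `β * γ = a`, and `β * b`, `γ * c` would be elements of `Ap` plus
positive multiples of `a`. Coprimality of `a` and `b` makes these relations so tight that `γ = 1`
and `c = γ * c ∈ ⟨a, b⟩`.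
-/

/-- Membership in the numerical semigroup generated by x, y, z. -/
def Semi3 (x y z n : ℕ) : Prop := ∃ i j k : ℕ, n = i * x + j * y + k * z

/-- n is a maximal element of the poset of gaps of S(x,y,z). -/
def MaxGap3 (x y z n : ℕ) : Prop :=
  (0 < n ∧ ¬ Semi3 x y z n) ∧ Semi3 x y z (n + x) ∧ Semi3 x y z (n + y) ∧ Semi3 x y z (n + z)

theorem Nat.eq_and_eq_of_mul_add_mul_eq {b c j k p q : ℕ} (hbc : b.Coprime c) (hj : j < c)
    (hp : p < c) (h : j * b + k * c = p * b + q * c) : j = p ∧ k = q := by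
  have hmod : j * b ≡ p * b [MOD c] := by
    simpa [Nat.ModEq, Nat.add_mul_mod_self_right] using congrArg (· % c) h
  obtain rfl : j = p :=
    (Nat.ModEq.cancel_right_of_coprime hbc.symm hmod).eq_of_lt_of_lt hj hp
  exact ⟨rfl, Nat.eq_of_mul_eq_mul_right (by omega) (Nat.add_left_cancel h)⟩

theorem IsLowerSet.exists_two_maximal_ne_bot {α : Type*} [PartialOrder α] [OrderBot α] {s : Set α}
    (hlow : IsLowerSet s) (hfin : s.Finite) (hne : s.Nonempty) (hs : ∀ p, s ≠ Set.Iic p) :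
    ∃ p q, p ≠ q ∧ p ≠ ⊥ ∧ q ≠ ⊥ ∧ Maximal (· ∈ s) p ∧ Maximal (· ∈ s) q := by
  obtain ⟨x₀, hx₀⟩ := hne
  obtain ⟨p, -, hp⟩ := hfin.exists_le_maximal hx₀
  have hsub : ¬ s ⊆ Set.Iic p := fun h =>
    hs p (h.antisymm fun _ hy => hlow hy hp.prop)
  obtain ⟨x, hx, hxp⟩ := Set.not_subset.1 hsub
  obtain ⟨q, hxq, hq⟩ := hfin.exists_le_maximal hx
  refine ⟨p, q, ?_, ?_, ?_, hp, hq⟩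
  · rintro rfl
    exact hxp hxq
  · exact fun hp0 => hxp (hxq.trans (hp.2 hq.prop (hp0 ▸ bot_le)))
  · exact fun hq0 => hxp (hxq.trans (hq0 ▸ bot_le))

def Semi2 (b c n : ℕ) : Prop := ∃ j k : ℕ, n = j * b + k * c

theorem Semi2.add {b c v w : ℕ} (hv : Semi2 b c v) (hw : Semi2 b c w) : Semi2 b c (v + w) := by
  obtain ⟨j, k, rfl⟩ := hv
  obtain ⟨j', k', rfl⟩ := hw
  exact ⟨j + j', k + k', by ring⟩

theorem Semi2.semi3_add_mul {a b c v : ℕ} (hv : Semi2 b c v) (t : ℕ) : Semi3 a b c (v + a * t) := by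
  obtain ⟨j, k, rfl⟩ := hv
  exact ⟨t, j, k, by ring⟩

/-- The Apéry element of `S(a,b,c)` with respect to `a` in the residue class of `n`, i.e. the least
element of `⟨b, c⟩` congruent to `n` modulo `a` (a junk `0` when there is none). -/
noncomputable def apery (a b c n : ℕ) : ℕ := sInf {v | v ≡ n [MOD a] ∧ Semi2 b c v}

section Apery

variable {a b c : ℕ}

theorem apery_le {n v : ℕ} (hv : Semi2 b c v) (hvn : v ≡ n [MOD a]) : apery a b c n ≤ v :=
  Nat.sInf_le ⟨hvn, hv⟩

theorem apery_congr {n n' : ℕ} (h : n ≡ n' [MOD a]) : apery a b c n = apery a b c n' := by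
  have hset : {v | v ≡ n [MOD a] ∧ Semi2 b c v} = {v | v ≡ n' [MOD a] ∧ Semi2 b c v} := by
    ext v
    exact and_congr_left fun _ => ⟨fun hv => hv.trans h, fun hv => hv.trans h.symm⟩
  rw [apery, apery, hset]

variable (ha : 0 < a) (hab : a.Coprime b)
include ha hab

theorem exists_mul_modEq (n : ℕ) : ∃ j < a, j * b ≡ n [MOD a] := by
  obtain ⟨j, hj, hjb⟩ := Nat.exists_mul_mod_eq_of_coprime n hab.symm ha.ne'
  exact ⟨j, hj, by rw [Nat.ModEq, mul_comm, hjb]⟩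

theorem apery_spec (n : ℕ) : apery a b c n ≡ n [MOD a] ∧ Semi2 b c (apery a b c n) := by
  obtain ⟨j, -, hj⟩ := exists_mul_modEq ha hab n
  exact Nat.sInf_mem (s := {v | v ≡ n [MOD a] ∧ Semi2 b c v}) ⟨j * b, hj, j, 0, by ring⟩

theorem apery_modEq (n : ℕ) : apery a b c n ≡ n [MOD a] := (apery_spec ha hab n).1

theorem semi2_apery (n : ℕ) : Semi2 b c (apery a b c n) := (apery_spec ha hab n).2

theorem apery_lt_mul (hb : 0 < b) (n : ℕ) : apery a b c n < a * b := by
  obtain ⟨j, hj, hjn⟩ := exists_mul_modEq ha hab n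
  calc apery a b c n ≤ j * b := apery_le ⟨j, 0, by ring⟩ hjn
    _ < a * b := Nat.mul_lt_mul_of_pos_right hj hb

theorem apery_apery (n : ℕ) : apery a b c (apery a b c n) = apery a b c n :=
  apery_congr (apery_modEq ha hab n)

theorem semi3_iff_apery_le {n : ℕ} : Semi3 a b c n ↔ apery a b c n ≤ n := by
  constructor
  · rintro ⟨i, j, k, rfl⟩
    calc apery a b c (i * a + j * b + k * c) ≤ j * b + k * c :=
          apery_le ⟨j, k, rfl⟩ (by simp [Nat.ModEq, add_assoc])
      _ ≤ i * a + j * b + k * c := by omega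
  · intro h
    obtain ⟨t, ht⟩ := (Nat.modEq_iff_dvd' h).mp (apery_modEq ha hab n)
    have hn : n = apery a b c n + a * t := by omega
    rw [hn]
    exact (semi2_apery ha hab n).semi3_add_mul t

theorem exists_eq_apery_add_mul {v : ℕ} (hv : Semi2 b c v) (hne : apery a b c v ≠ v) :
    ∃ t, 0 < t ∧ v = apery a b c v + a * t := by
  have hle : apery a b c v ≤ v := apery_le hv Nat.ModEq.rfl
  obtain ⟨t, ht⟩ := (Nat.modEq_iff_dvd' hle).mp (apery_modEq ha hab v)
  refine ⟨t, Nat.pos_of_ne_zero ?_, by omega⟩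
  rintro rfl
  omega

theorem semi3_sub_of_apery_ne {v : ℕ} (hv : Semi2 b c v) (hne : apery a b c v ≠ v) :
    Semi3 a b c (v - a) := by
  obtain ⟨t, ht, hvt⟩ := exists_eq_apery_add_mul ha hab hv hne
  obtain ⟨s, rfl⟩ := Nat.exists_eq_succ_of_ne_zero ht.ne'
  rw [hvt, Nat.mul_succ, ← add_assoc, Nat.add_sub_cancel]
  exact (semi2_apery ha hab v).semi3_add_mul s

theorem apery_eq_of_apery_add_eq {v w : ℕ} (hv : Semi2 b c v) (hw : Semi2 b c w)
    (h : apery a b c (v + w) = v + w) : apery a b c v = v := by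
  have hle : v + w ≤ apery a b c v + w := by
    rw [← h]
    exact apery_le ((semi2_apery ha hab v).add hw) ((apery_modEq ha hab v).add_right w)
  exact le_antisymm (apery_le hv Nat.ModEq.rfl) (by omega)

end Apery

theorem mul_eq_and_mul_eq_zero_of_relations {a b c d e y x' t u : ℕ} (ha : 0 < a)
    (hab : a.Coprime b) (ht : 0 < t) (he : 0 < e) (hde : d * e ≤ a)
    (hrel_b : d * b = y * c + a * t) (hrel_c : e * c = x' * b + a * u) :
    d * e = a ∧ y * x' = 0 := by
  have hdZ : (d : ℤ) * b = y * c + a * t := by exact_mod_cast hrel_b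
  have heZ : (e : ℤ) * c = x' * b + a * u := by exact_mod_cast hrel_c
  have key : ((d * e : ℕ) - (y * x' : ℕ) : ℤ) * b = a * (y * u + t * e) := by
    push_cast
    linear_combination (e : ℤ) * hdZ + (y : ℤ) * heZ
  have hpos : (0 : ℤ) < (d * e : ℕ) - (y * x' : ℕ) := by
    refine pos_of_mul_pos_left (key ▸ ?_) (Int.natCast_nonneg b)
    have : 0 < y * u + t * e := by positivity
    exact_mod_cast Nat.mul_pos ha this
  have hdvd : (a : ℤ) ∣ (d * e : ℕ) - (y * x' : ℕ) :=
    (Nat.isCoprime_iff_coprime.2 hab).dvd_of_dvd_mul_right ⟨_, key⟩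
  have := Int.le_of_dvd hpos hdvd
  omega

theorem false_of_rectangle_relations {a b c d e x y x' y' t u : ℕ} (ha : 0 < a) (hbc_lt : b < c)
    (hab : a.Coprime b) (hac : a.Coprime c) (hc : ¬ ∃ i j, c = i * a + j * b)
    (hrect : (x + d) * (y' + e) = a) (ht : 0 < t) (hu : 0 < u)
    (hrel_b : (x + d) * b = x * b + y * c + a * t)
    (hrel_c : (y' + e) * c = x' * b + y' * c + a * u) :
    False := by
  have hd : d * b = y * c + a * t := by linarith
  have he : e * c = x' * b + a * u := by linarith
  have hd0 : 0 < d := Nat.pos_of_ne_zero fun h => by subst h; nlinarith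
  have he0 : 0 < e := Nat.pos_of_ne_zero fun h => by subst h; nlinarith
  obtain ⟨hde, hyx'⟩ := mul_eq_and_mul_eq_zero_of_relations ha hab ht he0 (by nlinarith) hd he
  obtain ⟨rfl, rfl⟩ : x = 0 ∧ y' = 0 := by constructor <;> nlinarith
  suffices he1 : e = 1 by
    rw [he1, one_mul] at he
    exact hc ⟨u, x', by rw [he]; ring⟩
  rcases Nat.mul_eq_zero.1 hyx' with rfl | rfl
  · have had : a ≤ d := Nat.le_of_dvd hd0 (hab.dvd_of_dvd_mul_right ⟨t, by linarith⟩)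
    have : e ≤ 1 := Nat.le_of_mul_le_mul_left (c := d) (by omega) hd0
    omega
  · have hae : a ≤ e := Nat.le_of_dvd he0 (hac.dvd_of_dvd_mul_right ⟨u, by linarith⟩)
    obtain rfl : d = 1 := by
      have : d ≤ 1 := Nat.le_of_mul_le_mul_right (c := e) (by omega) he0
      omega
    obtain rfl : y = 0 := by
      by_contra hy
      have : c ≤ y * c := Nat.le_mul_of_pos_left c (Nat.pos_of_ne_zero hy)
      omega
    have ha1 : a = 1 := Nat.Coprime.eq_one_of_dvd hab ⟨t, by linarith⟩
    omega

def aperyPairs (a b c : ℕ) : Set (ℕ × ℕ) :=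
  {p | apery a b c (p.1 * b + p.2 * c) = p.1 * b + p.2 * c}

section AperyPairs

variable {a b c : ℕ}

theorem bot_mem_aperyPairs : ⊥ ∈ aperyPairs a b c := by
  show apery a b c (0 * b + 0 * c) = 0 * b + 0 * c
  simpa using apery_le (a := a) ⟨0, 0, by ring⟩ (Nat.ModEq.refl 0)

variable (ha : 0 < a) (hab : a.Coprime b)
include ha hab

theorem mk_mem_aperyPairs_of_apery_eq {n j k : ℕ} (h : apery a b c n = j * b + k * c) :
    (j, k) ∈ aperyPairs a b c := by
  show apery a b c (j * b + k * c) = j * b + k * c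
  rw [← h, apery_apery ha hab]

theorem isLowerSet_aperyPairs : IsLowerSet (aperyPairs a b c) := by
  rintro ⟨j, k⟩ ⟨j', k'⟩ ⟨hj, hk⟩ hp
  obtain ⟨dj, rfl⟩ := Nat.exists_eq_add_of_le hj
  obtain ⟨dk, rfl⟩ := Nat.exists_eq_add_of_le hk
  have hsplit : (j' + dj) * b + (k' + dk) * c = j' * b + k' * c + (dj * b + dk * c) := by ring
  change apery a b c ((j' + dj) * b + (k' + dk) * c) = (j' + dj) * b + (k' + dk) * c at hp
  rw [hsplit] at hp
  exact apery_eq_of_apery_add_eq ha hab ⟨j', k', rfl⟩ ⟨dj, dk, rfl⟩ hp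

theorem lt_of_mem_aperyPairs (hbc_le : b ≤ c) (hb : 0 < b) {p : ℕ × ℕ}
    (hp : p ∈ aperyPairs a b c) :
    p.1 < a ∧ p.2 < a := by
  have hlt : p.1 * b + p.2 * c < a * b := hp ▸ apery_lt_mul ha hab hb _
  constructor
  · exact Nat.lt_of_mul_lt_mul_right (by omega : p.1 * b < a * b)
  · exact Nat.lt_of_mul_lt_mul_right
      (by nlinarith [Nat.mul_le_mul_left a hbc_le] : p.2 * c < a * c)

theorem finite_aperyPairs (hbc_le : b ≤ c) (hb : 0 < b) : (aperyPairs a b c).Finite :=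
  (Set.finite_Iic (a, a)).subset fun _ hp =>
    have h := lt_of_mem_aperyPairs ha hab hbc_le hb hp
    ⟨h.1.le, h.2.le⟩

theorem eq_of_mem_aperyPairs (hab_lt : a < b) (hbc_lt : b < c) (hbc : b.Coprime c)
    {p q : ℕ × ℕ} (hp : p ∈ aperyPairs a b c) (hq : q ∈ aperyPairs a b c)
    (h : p.1 * b + p.2 * c = q.1 * b + q.2 * c) : p = q := by
  have hpa := (lt_of_mem_aperyPairs ha hab hbc_lt.le (by omega) hp).1
  have hqa := (lt_of_mem_aperyPairs ha hab hbc_lt.le (by omega) hq).1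
  obtain ⟨h1, h2⟩ := Nat.eq_and_eq_of_mul_add_mul_eq hbc (by omega) (by omega) h
  exact Prod.ext h1 h2

theorem ncard_aperyPairs (hab_lt : a < b) (hbc_lt : b < c) (hbc : b.Coprime c) :
    (aperyPairs a b c).ncard = a := by
  refine (Set.ncard_congr (t := Set.Iio a) (fun p _ => (p.1 * b + p.2 * c) % a)
    (fun _ _ => Nat.mod_lt _ ha)
    (fun p q hp hq hpq => eq_of_mem_aperyPairs ha hab hab_lt hbc_lt hbc hp hq ?_)
    fun r hr => ?_).trans (Set.ncard_Iio_nat a)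
  · rw [← hp, ← hq]
    exact apery_congr hpq
  · obtain ⟨j, k, hjk⟩ := semi2_apery (c := c) ha hab r
    refine ⟨(j, k), mk_mem_aperyPairs_of_apery_eq ha hab hjk, ?_⟩
    rw [← hjk]
    exact Eq.trans (apery_modEq ha hab r) (Nat.mod_eq_of_lt hr)

end AperyPairs

section MaximalGaps

variable {a b c : ℕ} (ha : 0 < a) (hab : a.Coprime b)
include ha hab

theorem maxGap3_of_maximal (hab_lt : a < b) (hbc_le : b ≤ c) {p : ℕ × ℕ}
    (hp : Maximal (· ∈ aperyPairs a b c) p) (hp0 : p ≠ ⊥) :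
    MaxGap3 a b c (p.1 * b + p.2 * c - a) := by
  obtain ⟨j, k⟩ := p
  show MaxGap3 a b c (j * b + k * c - a)
  have hw : apery a b c (j * b + k * c) = j * b + k * c := hp.prop
  have haw : a < j * b + k * c := by
    rcases Nat.eq_zero_or_pos j with rfl | hj
    · have hk : 0 < k := Nat.pos_of_ne_zero fun hk => hp0 (by rw [hk]; rfl)
      nlinarith
    · nlinarith
  have hmod : j * b + k * c ≡ j * b + k * c - a [MOD a] := by
    simpa [Nat.sub_add_cancel haw.le] using Nat.add_modEq_right (n := a) (a := j * b + k * c - a)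
  have hsucc : ∀ {j' k'}, (j, k) < (j', k') → Semi3 a b c (j' * b + k' * c - a) := fun hlt =>
    semi3_sub_of_apery_ne ha hab ⟨_, _, rfl⟩ (hp.not_prop_of_gt hlt)
  refine ⟨⟨by omega, fun hS => ?_⟩, ?_, ?_, ?_⟩
  · have := (semi3_iff_apery_le ha hab).1 hS
    rw [← apery_congr hmod, hw] at this
    omega
  · rw [Nat.sub_add_cancel haw.le]
    exact (semi3_iff_apery_le ha hab).2 hw.le
  · have h := hsucc (Prod.mk_lt_mk_iff_left.2 j.lt_succ_self)
    rwa [Nat.succ_mul, add_right_comm, Nat.sub_add_comm haw.le] at h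
  · have h := hsucc (Prod.mk_lt_mk_iff_right.2 k.lt_succ_self)
    rwa [Nat.succ_mul, ← add_assoc, Nat.sub_add_comm haw.le] at h

theorem aperyPairs_ne_Iic (hab_lt : a < b) (hbc_lt : b < c) (hac : a.Coprime c)
    (hbc : b.Coprime c) (hc : ¬ ∃ i j, c = i * a + j * b) (p : ℕ × ℕ) :
    aperyPairs a b c ≠ Set.Iic p := by
  intro hs
  obtain ⟨β, γ⟩ := p
  have hmem : ∀ {j k}, (j, k) ∈ aperyPairs a b c ↔ j ≤ β ∧ k ≤ γ := by simp [hs]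
  have hcard : (β + 1) * (γ + 1) = a := by
    rw [← ncard_aperyPairs ha hab hab_lt hbc_lt hbc, hs, ← Finset.coe_Iic, Set.ncard_coe_finset,
      Finset.card_Iic_prod, Nat.card_Iic, Nat.card_Iic]
  have hrel : ∀ {j k}, (j, k) ∉ aperyPairs a b c →
      ∃ x y t, x ≤ β ∧ y ≤ γ ∧ 0 < t ∧ j * b + k * c = x * b + y * c + a * t := by
    intro j k hjk
    obtain ⟨t, ht, hv⟩ := exists_eq_apery_add_mul ha hab ⟨j, k, rfl⟩ hjk
    obtain ⟨x, y, hxy⟩ := semi2_apery (c := c) ha hab (j * b + k * c)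
    obtain ⟨hx, hy⟩ := hmem.1 (mk_mem_aperyPairs_of_apery_eq ha hab hxy)
    exact ⟨x, y, t, hx, hy, ht, hxy ▸ hv⟩
  obtain ⟨x, y, t, hx, -, ht, hβ⟩ := hrel (j := β + 1) (k := 0) (by simp [hmem])
  obtain ⟨x', y', u, -, hy', hu, hγ⟩ := hrel (j := 0) (k := γ + 1) (by simp [hmem])
  obtain ⟨d, hd⟩ := Nat.exists_eq_add_of_le (by omega : x ≤ β + 1)
  obtain ⟨e, he⟩ := Nat.exists_eq_add_of_le (by omega : y' ≤ γ + 1)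
  rw [hd, he] at hcard
  exact false_of_rectangle_relations ha hbc_lt hab hac hc hcard ht hu
    (by rw [← hd]; simpa using hβ) (by rw [← he]; simpa using hγ)

end MaximalGaps

theorem two_maximal_gaps (a b c : ℕ) (ha : 0 < a) (hab : a < b) (hbc : b < c)
    (hcop1 : Nat.Coprime a b) (hcop2 : Nat.Coprime a c) (hcop3 : Nat.Coprime b c)
    (hc : ¬ ∃ i j : ℕ, c = i * a + j * b) :
    ∃ x y : ℕ, x ≠ y ∧ MaxGap3 a b c x ∧ MaxGap3 a b c y := by
  obtain ⟨p, q, hpq, hp0, hq0, hp, hq⟩ :=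
    (isLowerSet_aperyPairs ha hcop1).exists_two_maximal_ne_bot
      (finite_aperyPairs ha hcop1 hbc.le (by omega)) ⟨⊥, bot_mem_aperyPairs⟩
      (aperyPairs_ne_Iic ha hcop1 hab hbc hcop2 hcop3 hc)
  have hgp := maxGap3_of_maximal ha hcop1 hab hbc.le hp hp0
  have hgq := maxGap3_of_maximal ha hcop1 hab hbc.le hq hq0
  refine ⟨_, _, fun h => hpq (eq_of_mem_aperyPairs ha hcop1 hab hbc hcop3 hp.prop hq.prop ?_),
    hgp, hgq⟩
  have := hgp.1.1
  have := hgq.1.1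
  omega
end

section
/- Let A be a finite set of positive integers with gcd 1. For a partition λ, λ is an A-core (no cell of its Young diagram has hook length in A) if and only if the beta set β(λ) is an order ideal of P(A), i.e., β(λ) ⊆ P(A) and for all x ∈ β(λ) and y ∈ P(A), if x - y ∈ S(A) then y ∈ β(λ). -/
/-- A partition: a nonincreasing list of positive integers. -/
structure ListPartition where
  parts : List ℕ
  sorted : parts.Pairwise (· ≥ ·)
  pos : ∀ x ∈ parts, 0 < x

namespace ListPartition

/-- The i-th part (0-indexed), or 0 past the end. -/
def part (lam : ListPartition) (i : ℕ) : ℕ := lam.parts.getD i 0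

/-- Hook length of the cell in (0-indexed) row i and (1-indexed) column j:
    λ_i - j + #{rows k > i with λ_k ≥ j} + 1. -/
def hook (lam : ListPartition) (i j : ℕ) : ℕ :=
  lam.part i - j + ((List.range lam.parts.length).countP
    fun k => decide (i < k ∧ j ≤ lam.part k)) + 1

/-- λ is an A-core: no hook length lies in A. -/
def IsCore (A : Finset ℕ) (lam : ListPartition) : Prop :=
  ∀ i j : ℕ, i < lam.parts.length → 1 ≤ j → j ≤ lam.part i → lam.hook i j ∉ A

/-- The beta set of λ: first-column hook lengths {λ_i + r - i} (1-indexed form). -/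
def beta (lam : ListPartition) : Finset ℕ :=
  (Finset.range lam.parts.length).image fun i => lam.part i + (lam.parts.length - 1 - i)

/-- μ is a subpartition of λ. -/
def Sub (mu lam : ListPartition) : Prop :=
  mu.parts.length ≤ lam.parts.length ∧ ∀ i : ℕ, mu.part i ≤ lam.part i

end ListPartition

/-- Membership in the numerical semigroup generated by the finite set A. -/
def SemiS (A : Finset ℕ) (n : ℕ) : Prop := ∃ f : ℕ → ℕ, n = ∑ a ∈ A, f a * a

/-- n is a gap of S(A). -/
def GapS (A : Finset ℕ) (n : ℕ) : Prop := 0 < n ∧ ¬ SemiS A n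

/-- A is UM: some A-core contains every A-core as a subpartition. -/
def UM (A : Finset ℕ) : Prop :=
  ∃ κ : ListPartition, ListPartition.IsCore A κ ∧ ∀ μ : ListPartition, ListPartition.IsCore A μ → μ.Sub κ

/-
Put a bead at each position `β_i = λ_i + (r - 1 - i)` (rows numbered from `0`). The cells of
row `i` correspond bijectively to the empty positions `y < β_i`, the hook length of the cell
being `β_i - y`: these positions together with the beads `β_k`, `k > i`, exactly fill `[0, β_i)`.
So `λ` is an `A`-core iff `β(λ)` is stable under subtracting elements of `A`, hence of the monoid
`S(A)` they generate. For a set `β` of positive integers, stability under subtracting `S(A)` is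
the order-ideal condition: `x ∈ β ∩ S(A)` would put `x - x = 0` in `β`, and `y = x - (x - y)`;
conversely, for `n ∈ S(A)` and `n ≤ x ∈ β`, the number `x - n` is a gap (else `x ∈ S(A)`) below `x`.
-/

open Finset

def subStable (s : Finset ℕ) : AddSubmonoid ℕ where
  carrier := {n | ∀ x ∈ s, n ≤ x → x - n ∈ s}
  zero_mem' := by simp
  add_mem' {m n} hm hn x hx hle := by
    rw [Nat.sub_add_eq]
    exact hn _ (hm x hx (by omega)) (by omega)

theorem le_subStable_iff {S : AddSubmonoid ℕ} {s : Finset ℕ} (hs : 0 ∉ s) :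
    S ≤ subStable s ↔
      (∀ x ∈ s, x ∉ S) ∧ ∀ x ∈ s, ∀ y, y ∉ S → y ≤ x → x - y ∈ S → y ∈ s := by
  constructor
  · intro hS
    refine ⟨fun x hx hxS => hs ?_, fun x hx y _ hyx hxy => ?_⟩
    · simpa using hS hxS x hx le_rfl
    · simpa [Nat.sub_sub_self hyx] using hS hxy x hx (Nat.sub_le x y)
  · rintro ⟨hgap, hideal⟩ n hn x hx hnx
    have hxn : x - n ∉ S := fun h =>
      hgap x hx (by simpa [Nat.sub_add_cancel hnx] using add_mem h hn)
    exact hideal x hx (x - n) hxn (Nat.sub_le x n) (by rwa [Nat.sub_sub_self hnx])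

theorem semiS_iff_mem_closure {A : Finset ℕ} {n : ℕ} :
    SemiS A n ↔ n ∈ AddSubmonoid.closure (A : Set ℕ) := by
  rw [AddSubmonoid.mem_closure_finset]
  constructor
  · rintro ⟨f, rfl⟩
    exact ⟨fun a => if a ∈ A then f a else 0, fun a ha => by simp_all,
      sum_congr rfl fun a ha => by simp [ha]⟩
  · rintro ⟨f, -, rfl⟩
    exact ⟨f, rfl⟩

theorem gapS_iff_notMem_closure {A : Finset ℕ} {n : ℕ} :
    GapS A n ↔ n ∉ AddSubmonoid.closure (A : Set ℕ) := by
  rw [GapS, semiS_iff_mem_closure, and_iff_right_iff_imp, Nat.pos_iff_ne_zero]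
  rintro hn rfl
  exact hn (zero_mem _)

namespace ListPartition

variable (lam : ListPartition)

theorem one_le_part {i : ℕ} (hi : i < lam.parts.length) : 1 ≤ lam.part i := by
  rw [part, lam.parts.getD_eq_getElem 0 hi]
  exact lam.pos _ (lam.parts.getElem_mem hi)

theorem part_antitone : Antitone lam.part := by
  intro i k hik
  by_cases hk : k < lam.parts.length
  · rw [part, part, lam.parts.getD_eq_getElem 0 hk,
      lam.parts.getD_eq_getElem 0 (hik.trans_lt hk)]
    rcases hik.eq_or_lt with rfl | hik
    · rfl
    · exact List.pairwise_iff_getElem.mp lam.sorted i k _ _ hik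
  · rw [part, lam.parts.getD_eq_default 0 (by omega)]
    exact Nat.zero_le _

/-- The element `λ_i + r - i` of the beta set, with rows counted from `0`. -/
def betaNum (i : ℕ) : ℕ := lam.part i + (lam.parts.length - 1 - i)

variable {lam}

theorem mem_beta {x : ℕ} : x ∈ lam.beta ↔ ∃ i < lam.parts.length, lam.betaNum i = x := by
  simp [beta, betaNum]

theorem betaNum_mem_beta {i : ℕ} (hi : i < lam.parts.length) : lam.betaNum i ∈ lam.beta :=
  mem_beta.mpr ⟨i, hi, rfl⟩

variable (lam)

theorem betaNum_strictAntiOn : StrictAntiOn lam.betaNum (Set.Iio lam.parts.length) := by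
  intro i _ k hk hik
  have := lam.part_antitone hik.le
  simp only [Set.mem_Iio] at hk
  unfold betaNum
  omega

theorem zero_notMem_beta : 0 ∉ lam.beta := by
  intro h
  obtain ⟨i, hi, h⟩ := mem_beta.mp h
  have := lam.one_le_part hi
  unfold betaNum at h
  omega

/-- The empty position to which removing the rim hook of cell `(i, j)` slides the bead at
`betaNum i`. -/
def hookBase (i j : ℕ) : ℕ := (j - 1) + #{k ∈ Ioo i lam.parts.length | lam.part k < j}

theorem hook_add_hookBase {i j : ℕ} (hi : i < lam.parts.length) (hj : 1 ≤ j)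
    (hji : j ≤ lam.part i) : lam.hook i j + lam.hookBase i j = lam.betaNum i := by
  have hcount : (List.range lam.parts.length).countP
      (fun k => decide (i < k ∧ j ≤ lam.part k)) =
        #{k ∈ Ioo i lam.parts.length | j ≤ lam.part k} := by
    rw [← Nat.count, Nat.count_eq_card_filter_range]
    congr 1
    ext k
    simp [and_assoc, and_left_comm]
  have hsplit := card_filter_add_card_filter_not (s := Ioo i lam.parts.length) (j ≤ lam.part ·)
  simp only [not_le, Nat.card_Ioo] at hsplit
  rw [hook, hcount, hookBase, betaNum]
  omega

theorem hookBase_lt_betaNum {i j : ℕ} (hi : i < lam.parts.length) (hj : 1 ≤ j)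
    (hji : j ≤ lam.part i) : lam.hookBase i j < lam.betaNum i := by
  have := lam.hook_add_hookBase hi hj hji
  rw [hook] at this
  omega

theorem hookBase_notMem_beta {i j : ℕ} (hi : i < lam.parts.length) (hj : 1 ≤ j)
    (hji : j ≤ lam.part i) : lam.hookBase i j ∉ lam.beta := by
  intro hmem
  obtain ⟨k, hk, hbase⟩ := mem_beta.mp hmem
  have hlt := lam.hookBase_lt_betaNum hi hj hji
  rcases le_or_gt k i with hki | hik
  · have := lam.betaNum_strictAntiOn.antitoneOn hk hi hki
    omega
  rw [hookBase, betaNum] at hbase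
  by_cases hjk : j ≤ lam.part k
  · -- rows below `k` are the only ones that can be shorter than `j`
    have hsub : {t ∈ Ioo i lam.parts.length | lam.part t < j} ⊆ Ioo k lam.parts.length := by
      intro t ht
      simp only [mem_filter, mem_Ioo] at ht ⊢
      have := mt (@lam.part_antitone t k) (by omega)
      omega
    have := card_le_card hsub
    rw [Nat.card_Ioo] at this
    omega
  · -- rows from `k` on are all shorter than `j`
    have hsub : Ico k lam.parts.length ⊆ {t ∈ Ioo i lam.parts.length | lam.part t < j} := by
      intro t ht
      simp only [mem_filter, mem_Ioo, mem_Ico] at ht ⊢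
      have := lam.part_antitone ht.1
      omega
    have := card_le_card hsub
    rw [Nat.card_Ico] at this
    omega

theorem hookBase_strictMonoOn (i : ℕ) : StrictMonoOn (lam.hookBase i) (Set.Ici 1) := by
  intro j hj j' _ hjj'
  have : #{t ∈ Ioo i lam.parts.length | lam.part t < j} ≤
      #{t ∈ Ioo i lam.parts.length | lam.part t < j'} :=
    card_le_card (monotone_filter_right _ fun _ _ ht => ht.trans hjj')
  simp only [Set.mem_Ici] at hj
  unfold hookBase
  omega

/-- By counting, the `hookBase i j` for the cells of row `i` and the `betaNum k` for the rows
`k > i`, being injective families with disjoint images, fill `[0, betaNum i)`. -/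
theorem exists_hookBase_eq {i y : ℕ} (hi : i < lam.parts.length) (hy : y < lam.betaNum i)
    (hyβ : y ∉ lam.beta) : ∃ j, 1 ≤ j ∧ j ≤ lam.part i ∧ lam.hookBase i j = y := by
  set cells := (Icc 1 (lam.part i)).image (lam.hookBase i)
  set lower := (Ioo i lam.parts.length).image lam.betaNum
  have hcells : #cells = lam.part i := by
    rw [card_image_of_injOn, Nat.card_Icc, Nat.add_sub_cancel]
    exact (lam.hookBase_strictMonoOn i).injOn.mono fun j hj => (mem_Icc.mp hj).1
  have hlower : #lower = lam.parts.length - 1 - i := by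
    rw [card_image_of_injOn, Nat.card_Ioo, Nat.sub_right_comm]
    exact lam.betaNum_strictAntiOn.injOn.mono fun k hk => (mem_Ioo.mp hk).2
  have hdisj : Disjoint cells lower := by
    simp only [cells, lower, disjoint_left, mem_image, mem_Icc, mem_Ioo]
    rintro _ ⟨j, ⟨hj, hji⟩, rfl⟩ ⟨k, ⟨-, hk⟩, hbase⟩
    exact lam.hookBase_notMem_beta hi hj hji (hbase ▸ betaNum_mem_beta hk)
  have hsub : cells ∪ lower ⊆ range (lam.betaNum i) := by
    simp only [cells, lower, union_subset_iff, image_subset_iff, mem_range, mem_Icc, mem_Ioo]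
    exact ⟨fun j hj => lam.hookBase_lt_betaNum hi hj.1 hj.2,
      fun k hk => lam.betaNum_strictAntiOn hi hk.2 hk.1⟩
  have hfill : cells ∪ lower = range (lam.betaNum i) := by
    refine eq_of_subset_of_card_le hsub ?_
    rw [card_union_of_disjoint hdisj, hcells, hlower, card_range, betaNum]
  have hy' : y ∈ cells ∪ lower := hfill ▸ mem_range.mpr hy
  simp only [cells, lower, mem_union, mem_image, mem_Icc, mem_Ioo] at hy'
  rcases hy' with ⟨j, ⟨hj, hji⟩, rfl⟩ | ⟨k, ⟨-, hk⟩, rfl⟩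
  · exact ⟨j, hj, hji, rfl⟩
  · exact absurd (betaNum_mem_beta hk) hyβ

variable {lam}

theorem isCore_iff {A : Finset ℕ} :
    lam.IsCore A ↔ (A : Set ℕ) ⊆ subStable lam.beta := by
  constructor
  · intro hcore a ha x hx hax
    obtain ⟨i, hi, rfl⟩ := mem_beta.mp hx
    by_contra hnot
    have ha0 : a ≠ 0 := by rintro rfl; exact hnot (betaNum_mem_beta hi)
    obtain ⟨j, hj, hji, hbase⟩ := lam.exists_hookBase_eq hi (by omega) hnot
    have := lam.hook_add_hookBase hi hj hji
    exact hcore i j hi hj hji (by rwa [show lam.hook i j = a by omega])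
  · intro hsub i j hi hj hji hA
    have := lam.hook_add_hookBase hi hj hji
    have hmem := hsub hA _ (betaNum_mem_beta hi) (by omega)
    rw [show lam.betaNum i - lam.hook i j = lam.hookBase i j by omega] at hmem
    exact lam.hookBase_notMem_beta hi hj hji hmem

end ListPartition

theorem core_iff_beta_order_ideal_general (A : Finset ℕ) (lam : ListPartition) :
    ListPartition.IsCore A lam ↔
      ((∀ x ∈ lam.beta, GapS A x) ∧
        ∀ x ∈ lam.beta, ∀ y : ℕ, GapS A y → y ≤ x → SemiS A (x - y) → y ∈ lam.beta) := by
  simp only [gapS_iff_notMem_closure, semiS_iff_mem_closure]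
  rw [ListPartition.isCore_iff, ← AddSubmonoid.closure_le]
  exact le_subStable_iff lam.zero_notMem_beta

theorem core_iff_beta_order_ideal (A : Finset ℕ) (hA : ∀ a ∈ A, 0 < a)
    (hgcd : A.gcd id = 1) (lam : ListPartition) :
    ListPartition.IsCore A lam ↔
      ((∀ x ∈ lam.beta, GapS A x) ∧
        ∀ x ∈ lam.beta, ∀ y : ℕ, GapS A y → y ≤ x → SemiS A (x - y) → y ∈ lam.beta) :=
  core_iff_beta_order_ideal_general A lam
end

section
/- Let a and b be relatively prime positive integers, and call a partition an (a,b)-core if it is both an a-core and a b-core. Then the partition κ whose beta set is exactly the set of all positive integers of the form ab - ia - jb with i, j ≥ 1 is an (a,b)-core. -/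
namespace ListPartition

lemma part_antitone' (lam : ListPartition) {i k : ℕ} (h : i ≤ k) : lam.part k ≤ lam.part i := by
  unfold part
  by_cases hk : k < lam.parts.length
  · have hi : i < lam.parts.length := lt_of_le_of_lt h hk
    rw [List.getD_eq_getElem _ _ hk, List.getD_eq_getElem _ _ hi]
    rcases eq_or_lt_of_le h with rfl | hlt
    · exact le_refl _
    · exact (List.pairwise_iff_getElem.mp lam.sorted) i k hi hk hlt
  · rw [List.getD_eq_default _ _ (le_of_not_gt hk)]
    exact Nat.zero_le _

lemma countP_eq' (n : ℕ) (p : ℕ → Prop) [DecidablePred p] :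
    (List.range n).countP (fun k => decide (p k)) = ((Finset.range n).filter p).card := by
  simp [Finset.filter, Finset.range, Multiset.range, List.countP_eq_length_filter]

lemma hook_beta' (lam : ListPartition) {i j : ℕ} (hi : i < lam.parts.length)
    (hj1 : 1 ≤ j) (hj2 : j ≤ lam.part i) :
    ∃ x : ℕ, lam.hook i j + x = lam.part i + (lam.parts.length - 1 - i) ∧
      ∀ m, m < lam.parts.length → x ≠ lam.part m + (lam.parts.length - 1 - m) := by
  set r := lam.parts.length with hr
  set t := ((Finset.range r).filter (fun k => i < k ∧ j ≤ lam.part k)).card with ht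
  have hhook : lam.hook i j = lam.part i - j + t + 1 := by
    unfold hook; rw [countP_eq']
  have htub : t ≤ r - 1 - i := by
    have hsub : ((Finset.range r).filter (fun k => i < k ∧ j ≤ lam.part k)) ⊆ Finset.Ioo i r := by
      intro k hk
      simp only [Finset.mem_filter, Finset.mem_range] at hk
      exact Finset.mem_Ioo.mpr ⟨hk.2.1, hk.1⟩
    have := Finset.card_le_card hsub
    rw [Nat.card_Ioo] at this
    omega
  refine ⟨(j - 1) + ((r - 1 - i) - t), by omega, ?_⟩
  intro m hm hx
  by_cases him : i < m
  case neg =>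
    have h1 : lam.part i ≤ lam.part m := lam.part_antitone' (le_of_not_gt him)
    have h2 : i < r := hi
    omega
  case pos =>
    by_cases hjm : j ≤ lam.part m
    · have hsub : Finset.Ioc i m ⊆ (Finset.range r).filter (fun k => i < k ∧ j ≤ lam.part k) := by
        intro k hk
        rw [Finset.mem_Ioc] at hk
        simp only [Finset.mem_filter, Finset.mem_range]
        exact ⟨lt_of_le_of_lt hk.2 hm, hk.1, le_trans hjm (lam.part_antitone' hk.2)⟩
      have := Finset.card_le_card hsub
      rw [Nat.card_Ioc] at this
      omega
    · have hsub : (Finset.range r).filter (fun k => i < k ∧ j ≤ lam.part k) ⊆ Finset.Ioo i m := by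
        intro k hk
        simp only [Finset.mem_filter, Finset.mem_range] at hk
        refine Finset.mem_Ioo.mpr ⟨hk.2.1, ?_⟩
        by_contra hkm
        exact hjm (le_trans hk.2.2 (lam.part_antitone' (le_of_not_gt hkm)))
      have := Finset.card_le_card hsub
      rw [Nat.card_Ioo] at this
      omega

end ListPartition

theorem core_two_and_maximal_core (a b : ℕ) (ha : 0 < a) (hb : 0 < b)
    (hab : Nat.Coprime a b) :
    (∀ lam : ListPartition,
      ListPartition.IsCore {a, b} lam ↔ ListPartition.IsCore {a} lam ∧ ListPartition.IsCore {b} lam) ∧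
    ∀ κ : ListPartition,
      (∀ n : ℕ, n ∈ κ.beta ↔
        ∃ i j : ℕ, 1 ≤ i ∧ 1 ≤ j ∧ (n : ℤ) = (a : ℤ) * b - i * a - j * b) →
      ListPartition.IsCore {a, b} κ := by
  
  constructor
  · intro lam
    unfold ListPartition.IsCore
    simp only [Finset.mem_insert, Finset.mem_singleton]
    constructor
    · intro h
      exact ⟨fun i j h1 h2 h3 hm => h i j h1 h2 h3 (Or.inl hm),
             fun i j h1 h2 h3 hm => h i j h1 h2 h3 (Or.inr hm)⟩
    · rintro ⟨h1, h2⟩ i j hi hj1 hj2 hm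
      exact hm.elim (h1 i j hi hj1 hj2) (h2 i j hi hj1 hj2)
  · intro kappa H i j hi hj1 hj2 hmem
    obtain ⟨x, hx, hxm⟩ := ListPartition.hook_beta' kappa hi hj1 hj2
    -- the beta value of row i is in the beta set
    have hbmem : kappa.part i + (kappa.parts.length - 1 - i) ∈ kappa.beta := by
      unfold ListPartition.beta
      exact Finset.mem_image.mpr ⟨i, Finset.mem_range.mpr hi, rfl⟩
    obtain ⟨i', j', hi', hj', heq⟩ := (H _).mp hbmem
    rw [Finset.mem_insert, Finset.mem_singleton] at hmem
    have hxin : x ∈ kappa.beta := by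
      rcases hmem with hma | hmb
      · refine (H x).mpr ⟨i' + 1, j', by omega, hj', ?_⟩
        have hcast : (a : ℤ) + (x : ℤ) = ((kappa.part i + (kappa.parts.length - 1 - i) : ℕ) : ℤ) := by
          exact_mod_cast congrArg (Nat.cast : ℕ → ℤ) (hma ▸ hx)
        push_cast
        push_cast at heq
        linarith
      · refine (H x).mpr ⟨i', j' + 1, hi', by omega, ?_⟩
        have hcast : (b : ℤ) + (x : ℤ) = ((kappa.part i + (kappa.parts.length - 1 - i) : ℕ) : ℤ) := by
          exact_mod_cast congrArg (Nat.cast : ℕ → ℤ) (hmb ▸ hx)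
        push_cast
        push_cast at heq
        linarith
    unfold ListPartition.beta at hxin
    obtain ⟨m, hm, hfm⟩ := Finset.mem_image.mp hxin
    exact hxm m (Finset.mem_range.mp hm) hfm.symm
end
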